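/- arXiv:2410.08897 — 2 statements merged into one kernel-verified Lean document; each statement's English description precedes it below -/
import Mathlib

section
/- Let A(w,z) = Σ_{d≥0} A_d(w)·z^d ∈ (ℚ[[w]])[[z]], and let θ be the ℚ[[w]]-linear operator on (ℚ[[w]])[[z]] defined by θ(F) = w·F + z·(∂F/∂z), where ∂/∂z is the formal derivative in z. Then θ⁴A − 9·z·(3θ+1)²(3θ+2)²A = w⁴ in (ℚ[[w]])[[z]]; equivalently, the formal series R(w,t) = e^{wt}·Σ_{d≥0} A_d(w)·e^{dt} satisfies the Picard–Fuchs type equation (d/dt)⁴R − 3⁶·e^t·((d/dt)+1/3)²((d/dt)+2/3)²R = e^{wt}·w⁴. -/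
/-- `A_d(w) = (∏_{r=1}^{3d} (3w+r))² · ((∏_{r=1}^{d} (w+r))⁶)⁻¹ ∈ ℚ[[w]]`. -/
noncomputable def Acoef (d : ℕ) : PowerSeries ℚ :=
  (∏ r ∈ Finset.Icc 1 (3 * d), (3 * PowerSeries.X + (r : PowerSeries ℚ))) ^ 2 *
    ((∏ r ∈ Finset.Icc 1 d, (PowerSeries.X + (r : PowerSeries ℚ))) ^ 6)⁻¹

/-- `A(w,z) = Σ_{d≥0} A_d(w)·z^d ∈ (ℚ[[w]])[[z]]`. -/
noncomputable def Aseries : PowerSeries (PowerSeries ℚ) :=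
  PowerSeries.mk fun d => Acoef d

/-- The operator `θ(F) = w·F + z·∂F/∂z` on `(ℚ[[w]])[[z]]`. -/
noncomputable def thetaOp (F : PowerSeries (PowerSeries ℚ)) : PowerSeries (PowerSeries ℚ) :=
  PowerSeries.C (R := PowerSeries ℚ) PowerSeries.X * F + PowerSeries.X * PowerSeries.derivativeFun F

/-- The operator `3θ + 1`. -/
noncomputable def L1 (F : PowerSeries (PowerSeries ℚ)) : PowerSeries (PowerSeries ℚ) :=
  3 * thetaOp F + F

/-- The operator `3θ + 2`. -/
noncomputable def L2 (F : PowerSeries (PowerSeries ℚ)) : PowerSeries (PowerSeries ℚ) :=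
  3 * thetaOp F + 2 * F

/-! The operator `θ` acts on `z^d` as multiplication by `w + d`, so comparing coefficients of `z^d`
turns the equation into `A_0 = 1` together with the two-term recurrence
`(w+d+1)⁴ A_{d+1} = 9 (3w+3d+1)² (3w+3d+2)² A_d`, which is read off from the product formula
after clearing the (invertible) denominators. -/

open PowerSeries

theorem coeff_C_mul_add_X_mul_derivative {R : Type*} [CommSemiring R] (c : R) (F : R⟦X⟧)
    (d : ℕ) : coeff d (C c * F + X * d⁄dX R F) = (c + d) * coeff d F := by
  rw [map_add, coeff_C_mul]
  cases d with
  | zero => simp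
  | succ n =>
    rw [coeff_succ_X_mul, coeff_derivative]
    push_cast
    ring

theorem coeff_thetaOp (F : PowerSeries (PowerSeries ℚ)) (d : ℕ) :
    coeff d (thetaOp F) = (X + (d : PowerSeries ℚ)) * coeff d F :=
  coeff_C_mul_add_X_mul_derivative _ F d

theorem coeff_L1 (F : PowerSeries (PowerSeries ℚ)) (d : ℕ) :
    coeff d (L1 F) = (3 * (X + (d : PowerSeries ℚ)) + 1) * coeff d F := by
  rw [L1, map_add, ← map_ofNat (C (R := PowerSeries ℚ)) 3, coeff_C_mul, coeff_thetaOp]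
  ring

theorem coeff_L2 (F : PowerSeries (PowerSeries ℚ)) (d : ℕ) :
    coeff d (L2 F) = (3 * (X + (d : PowerSeries ℚ)) + 2) * coeff d F := by
  rw [L2, map_add, ← map_ofNat (C (R := PowerSeries ℚ)) 3,
    ← map_ofNat (C (R := PowerSeries ℚ)) 2, coeff_C_mul, coeff_C_mul, coeff_thetaOp]
  ring

theorem prod_Icc_one_succ_add {S : Type*} [CommSemiring S] (a : S) (n : ℕ) :
    ∏ r ∈ Finset.Icc 1 (n + 1), (a + (r : S))
      = (∏ r ∈ Finset.Icc 1 n, (a + (r : S))) * (a + (n + 1)) := by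
  rw [Finset.prod_Icc_succ_top (by omega), Nat.cast_succ]

theorem constantCoeff_prod_X_add_ne_zero (d : ℕ) :
    constantCoeff (∏ r ∈ Finset.Icc 1 d, (X + (r : PowerSeries ℚ))) ≠ 0 := by
  rw [map_prod]
  refine Finset.prod_ne_zero_iff.mpr fun r hr => ?_
  simp only [map_add, constantCoeff_X, map_natCast, zero_add, Nat.cast_ne_zero]
  have := (Finset.mem_Icc.mp hr).1
  omega

theorem Acoef_mul_prod_pow (d : ℕ) :
    Acoef d * (∏ r ∈ Finset.Icc 1 d, (X + (r : PowerSeries ℚ))) ^ 6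
      = (∏ r ∈ Finset.Icc 1 (3 * d), (3 * X + (r : PowerSeries ℚ))) ^ 2 := by
  rw [Acoef, mul_assoc, PowerSeries.inv_mul_cancel _ (by
    rw [map_pow]; exact pow_ne_zero _ (constantCoeff_prod_X_add_ne_zero d)), mul_one]

theorem Acoef_zero : Acoef 0 = 1 := by
  simp [Acoef]

theorem Acoef_succ (n : ℕ) :
    (X + ((n : PowerSeries ℚ) + 1)) ^ 4 * Acoef (n + 1)
      = 9 * (3 * X + (3 * (n : PowerSeries ℚ) + 1)) ^ 2
          * (3 * X + (3 * (n : PowerSeries ℚ) + 2)) ^ 2 * Acoef n := by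
  have hQ : (∏ r ∈ Finset.Icc 1 (n + 1), (X + (r : PowerSeries ℚ))) ^ 6 ≠ 0 :=
    pow_ne_zero _ fun h => constantCoeff_prod_X_add_ne_zero (n + 1) (by rw [h, map_zero])
  -- The new numerator factor `3w+3n+3 = 3(w+n+1)` squared cancels two of the six new
  -- denominator factors `w+n+1`, leaving the `9` and the fourth power.
  refine mul_right_cancel₀ hQ ?_
  have hA := Acoef_mul_prod_pow n
  have hA' := Acoef_mul_prod_pow (n + 1)
  rw [show 3 * (n + 1) = 3 * n + 1 + 1 + 1 by ring, prod_Icc_one_succ_add, prod_Icc_one_succ_add,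
    prod_Icc_one_succ_add, prod_Icc_one_succ_add] at hA'
  rw [prod_Icc_one_succ_add]
  push_cast at hA'
  linear_combination (X + ((n : PowerSeries ℚ) + 1)) ^ 4 * hA'
    - 9 * (3 * X + (3 * (n : PowerSeries ℚ) + 1)) ^ 2 * (3 * X + (3 * (n : PowerSeries ℚ) + 2)) ^ 2
      * (X + ((n : PowerSeries ℚ) + 1)) ^ 6 * hA

/-- The Picard–Fuchs type equation `θ⁴A − 9·z·(3θ+1)²(3θ+2)²A = w⁴` in `(ℚ[[w]])[[z]]`,
equivalently `(d/dt)⁴R − 3⁶·e^t·((d/dt)+1/3)²((d/dt)+2/3)²R = e^{wt}·w⁴` for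
`R(w,t) = e^{wt}·Σ_{d≥0} A_d(w)·e^{dt}`. -/
theorem picard_fuchs_formal :
    thetaOp (thetaOp (thetaOp (thetaOp Aseries))) -
      9 * PowerSeries.X * (L1 (L1 (L2 (L2 Aseries)))) =
    PowerSeries.C (R := PowerSeries ℚ) (PowerSeries.X ^ 4) := by
  ext1 d
  rw [map_sub, mul_assoc, ← map_ofNat (C (R := PowerSeries ℚ)) 9, coeff_C_mul,
    coeff_thetaOp, coeff_thetaOp, coeff_thetaOp, coeff_thetaOp, coeff_C]
  cases d with
  | zero =>
    simp only [Nat.cast_zero, add_zero, coeff_zero_X_mul, Aseries, coeff_mk, Acoef_zero, ↓reduceIte]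
    ring
  | succ n =>
    rw [coeff_succ_X_mul, coeff_L1, coeff_L1, coeff_L2, coeff_L2, if_neg n.succ_ne_zero,
      sub_eq_zero]
    simp only [Aseries, coeff_mk]
    push_cast
    linear_combination Acoef_succ n
end

section
/- The recursion defining I_{p,q} is well-defined for all 0 ≤ p ≤ q ≤ 4, and for every 0 ≤ p ≤ 4 the diagonal element I_{p,p} lies in the subring ℚ[[z]] ⊆ S (i.e. it contains no positive powers of t) and has constant coefficient 1; in particular each I_{p,p} is a unit of S, so every division occurring in the recursion is legitimate. -/
/-- `Ĩ_q ∈ ℚ[[z]]`: the coefficient of `z^d` is the coefficient of `w^q` in `A_d(w)`. -/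
noncomputable def Itil (q : ℕ) : PowerSeries ℚ :=
  PowerSeries.mk fun d => PowerSeries.coeff q (Acoef d)

/-- `S = (ℚ[[z]])[t]`. -/
abbrev S : Type := Polynomial (PowerSeries ℚ)

/-- The operator `z·∂/∂z` on `ℚ[[z]]`. -/
noncomputable def zdz (f : PowerSeries ℚ) : PowerSeries ℚ :=
  PowerSeries.mk fun n => (n : ℚ) * PowerSeries.coeff n f

/-- The derivation `δ = ∂/∂t + z·∂/∂z` on `S = (ℚ[[z]])[t]`, determined by
`δ(t) = 1` and `δ(z) = z`. -/
noncomputable def deltaOp (p : S) : S :=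
  Polynomial.derivative p + p.sum fun n a => Polynomial.C (zdz a) * Polynomial.X ^ n

/-- `I_{0,q} = Σ_{k=0}^{q} (t^k/k!)·Ĩ_{q−k} ∈ S`. -/
noncomputable def I0S (q : ℕ) : S :=
  ∑ k ∈ Finset.range (q + 1),
    Polynomial.C (PowerSeries.C (1 / (k.factorial : ℚ)) * Itil (q - k)) * Polynomial.X ^ k

/-- The recursion `I_{p,q} = δ(I_{p−1,q} · I_{p−1,p−1}⁻¹)`, where the inverse of the
(constant, unit) polynomial `I_{p−1,p−1}` is taken via the power series inverse of its
constant coefficient. -/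
noncomputable def IPQ : ℕ → ℕ → S
  | 0 => I0S
  | p + 1 => fun q => deltaOp (IPQ p q * Polynomial.C (((IPQ p p).coeff 0)⁻¹))

/-!
Write `I_{p,q} = Σ_{k ≤ q-p} (t^k/k!) · J_p(q-p-k)` for a sequence `J_p` of power series in `z`.
Since `δ(t^k/k!) = t^(k-1)/(k-1)!`, applying `δ` to such a polynomial whose bottom series `J(0)` is
killed by `z·d/dz` lowers the `t`-degree by one and replaces `J(j)` by `J(j) + z·J'(j+1)`.
Dividing by `I_{p,p} = J_p(0)` makes the bottom series `1`, so the shape propagates, and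
`J_{p+1}(0) = 1 + z·(J_p(1)/J_p(0))'` keeps constant coefficient `1`.
-/

open Polynomial

@[simp]
lemma coeff_zdz (f : PowerSeries ℚ) (n : ℕ) :
    PowerSeries.coeff n (zdz f) = n * PowerSeries.coeff n f := by
  simp [zdz]

lemma constantCoeff_zdz (f : PowerSeries ℚ) : PowerSeries.constantCoeff (zdz f) = 0 := by
  rw [← PowerSeries.coeff_zero_eq_constantCoeff_apply, coeff_zdz, Nat.cast_zero, zero_mul]

lemma zdz_C_mul (c : ℚ) (f : PowerSeries ℚ) :
    zdz (PowerSeries.C c * f) = PowerSeries.C c * zdz f := by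
  ext n
  simp only [coeff_zdz, PowerSeries.coeff_C_mul]
  ring

@[simp]
lemma zdz_zero : zdz 0 = 0 := by
  ext n
  simp

@[simp]
lemma zdz_one : zdz 1 = 0 := by
  ext n
  simp [PowerSeries.coeff_one]

lemma coeff_deltaOp (P : S) (k : ℕ) :
    (deltaOp P).coeff k = P.coeff (k + 1) * (k + 1) + zdz (P.coeff k) := by
  rw [deltaOp, coeff_add, coeff_derivative, Polynomial.sum_def, finsetSum_coeff]
  simp only [coeff_C_mul_X_pow]
  rw [Finset.sum_ite_eq]
  split_ifs with hk
  · rfl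
  · rw [notMem_support_iff.mp hk, zdz_zero]

noncomputable def expPoly (a : ℕ → PowerSeries ℚ) (n : ℕ) : S :=
  ∑ k ∈ Finset.range (n + 1),
    C (PowerSeries.C (1 / (k.factorial : ℚ)) * a (n - k)) * X ^ k

lemma I0S_eq_expPoly (q : ℕ) : I0S q = expPoly Itil q := rfl

lemma coeff_expPoly (a : ℕ → PowerSeries ℚ) (n k : ℕ) :
    (expPoly a n).coeff k =
      if k ≤ n then PowerSeries.C (1 / (k.factorial : ℚ)) * a (n - k) else 0 := by
  simp only [expPoly, finsetSum_coeff, coeff_C_mul_X_pow, Finset.sum_ite_eq, Finset.mem_range,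
    Nat.lt_succ_iff]

lemma expPoly_zero (a : ℕ → PowerSeries ℚ) : expPoly a 0 = C (a 0) := by
  simp [expPoly]

lemma expPoly_mul_C (a : ℕ → PowerSeries ℚ) (n : ℕ) (c : PowerSeries ℚ) :
    expPoly a n * C c = expPoly (fun j => a j * c) n := by
  refine Polynomial.ext fun k => ?_
  simp only [coeff_mul_C, coeff_expPoly]
  split_ifs <;> ring

lemma inv_factorial_succ_mul (k : ℕ) :
    PowerSeries.C (1 / ((k + 1).factorial : ℚ)) * (k + 1) =
      PowerSeries.C (1 / (k.factorial : ℚ)) := by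
  rw [show ((k : PowerSeries ℚ) + 1) = PowerSeries.C ((k : ℚ) + 1) by simp, ← map_mul,
    Nat.factorial_succ]
  congr 1
  push_cast
  field_simp

noncomputable def deltaSeq (a : ℕ → PowerSeries ℚ) (j : ℕ) : PowerSeries ℚ :=
  a j + zdz (a (j + 1))

lemma deltaOp_expPoly (a : ℕ → PowerSeries ℚ) (n : ℕ) (ha : zdz (a 0) = 0) :
    deltaOp (expPoly a (n + 1)) = expPoly (deltaSeq a) n := by
  refine Polynomial.ext fun k => ?_
  rw [coeff_deltaOp, coeff_expPoly, coeff_expPoly, coeff_expPoly]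
  by_cases hkn : k ≤ n
  · rw [if_pos (by omega), if_pos (by omega), if_pos hkn, deltaSeq, zdz_C_mul,
      show n + 1 - (k + 1) = n - k by omega, show n + 1 - k = n - k + 1 by omega,
      mul_right_comm, inv_factorial_succ_mul, mul_add]
  · rw [if_neg (by omega), if_neg hkn, zero_mul, zero_add]
    split_ifs with hk
    · rw [show n + 1 - k = 0 by omega, zdz_C_mul, ha, mul_zero]
    · exact zdz_zero

noncomputable def Jseq : ℕ → ℕ → PowerSeries ℚ
  | 0 => Itil
  | p + 1 => deltaSeq fun j => Jseq p j * (Jseq p 0)⁻¹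

lemma constantCoeff_Itil_zero : PowerSeries.constantCoeff (Itil 0) = 1 := by
  simp [Itil, Acoef]

lemma constantCoeff_Jseq_zero (p : ℕ) : PowerSeries.constantCoeff (Jseq p 0) = 1 := by
  induction p with
  | zero => exact constantCoeff_Itil_zero
  | succ p ih => simp [Jseq, deltaSeq, constantCoeff_zdz, ih]

lemma Jseq_zero_mul_inv (p : ℕ) : Jseq p 0 * (Jseq p 0)⁻¹ = 1 :=
  PowerSeries.mul_inv_cancel _ (by simp [constantCoeff_Jseq_zero])

lemma IPQ_eq_expPoly (p : ℕ) : ∀ q, p ≤ q → IPQ p q = expPoly (Jseq p) (q - p) := by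
  induction p with
  | zero => intro q _; exact I0S_eq_expPoly q
  | succ p ih =>
    intro q hpq
    have hdiag : (IPQ p p).coeff 0 = Jseq p 0 := by
      rw [ih p le_rfl, Nat.sub_self, expPoly_zero, coeff_C_zero]
    change deltaOp (IPQ p q * C ((IPQ p p).coeff 0)⁻¹) = _
    rw [hdiag, ih q (by omega), expPoly_mul_C, show q - p = q - (p + 1) + 1 by omega,
      deltaOp_expPoly _ _ (by rw [Jseq_zero_mul_inv, zdz_one])]
    rfl

lemma IPQ_diag (p : ℕ) : IPQ p p = C (Jseq p 0) := by
  rw [IPQ_eq_expPoly p p le_rfl, Nat.sub_self, expPoly_zero]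

/-- The recursion defining `I_{p,q}` is well-defined for `0 ≤ p ≤ q ≤ 4`: for every
`0 ≤ p ≤ 4`, the diagonal element `I_{p,p}` lies in `ℚ[[z]] ⊆ S` (it is a constant
polynomial in `t`) with constant coefficient `1`; in particular each `I_{p,p}` is a unit
of `S`, so every division occurring in the recursion is legitimate. -/
theorem IPQ_diagonal_is_unit :
    ∀ p ≤ 4, (∃ f : PowerSeries ℚ, IPQ p p = Polynomial.C f ∧
        PowerSeries.constantCoeff f = 1) ∧ IsUnit (IPQ p p) := by
  intro p _
  refine ⟨⟨Jseq p 0, IPQ_diag p, constantCoeff_Jseq_zero p⟩, ?_⟩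
  rw [IPQ_diag]
  exact (IsUnit.of_mul_eq_one _ (Jseq_zero_mul_inv p)).map C
end
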